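/- On the elliptic curve E over the rational function field ℚ(t) given by S² = T³ − 2(2t² − t + 1)/(t − 1)·T² + (2t − 1)²(t + 1)²/(t − 1)²·T, the point R = ((t + 1)(2t − 1)/(t − 1), 2(t + 1)(2t − 1)/(t − 1)) is a rational point of exact order 4: R lies on E, 4•R is the identity, and 2•R is not the identity. -/

import Mathlib

/-- The parameter `t`, as the generator of the rational function field `ℚ(t)`. -/
noncomputable def tV : RatFunc ℚ := RatFunc.X

/-- The elliptic curve `E : S² = T³ - 2(2t² - t + 1)/(t - 1)·T² + (2t - 1)²(t + 1)²/(t - 1)²·T`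
over `ℚ(t)`. -/
noncomputable def Ecurve : WeierstrassCurve.Affine (RatFunc ℚ) :=
  { a₁ := 0, a₂ := -(2 * ((2 * tV ^ 2 - tV + 1) / (tV - 1))), a₃ := 0,
    a₄ := (2 * tV - 1) ^ 2 * (tV + 1) ^ 2 / (tV - 1) ^ 2, a₆ := 0 }

lemma htwoRF : (2 : RatFunc ℚ) ≠ 0 := by
  have h := RatFunc.algebraMap_ne_zero (K := ℚ) (x := (2 : Polynomial ℚ)) (by norm_num)
  rwa [map_ofNat] at h

lemma tV_sub_ne (c : ℚ) : tV - (algebraMap ℚ (RatFunc ℚ)) c ≠ 0 := by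
  have h : (Polynomial.X - Polynomial.C c : Polynomial ℚ) ≠ 0 := Polynomial.X_sub_C_ne_zero c
  have := RatFunc.algebraMap_ne_zero h
  simpa [tV, map_sub, RatFunc.algebraMap_X, RatFunc.algebraMap_C,
    IsScalarTower.algebraMap_apply ℚ (Polynomial ℚ) (RatFunc ℚ)] using this

lemma half_of_double_eq_zero {y : RatFunc ℚ} (h : 2 * y = 0) : y = 0 := by
  rcases mul_eq_zero.mp h with h' | h'
  · exact absurd h' htwoRF
  · exact h'

lemma ht1 : tV - 1 ≠ 0 := by simpa using tV_sub_ne 1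
lemma ht2 : tV + 1 ≠ 0 := by simpa [sub_neg_eq_add] using tV_sub_ne (-1)
lemma ht3 : 2 * tV - 1 ≠ 0 := by
  have h := tV_sub_ne (1/2)
  intro hc
  apply h
  apply half_of_double_eq_zero
  rw [← hc]
  have hmap : (algebraMap ℚ (RatFunc ℚ)) (1/2 : ℚ) = 1/2 := by
    rw [map_div₀, map_one, map_ofNat]
  rw [hmap]
  rw [mul_sub, mul_one_div, div_self htwoRF]

open Classical in
/-- The point `R = ((t + 1)(2t - 1)/(t - 1), 2(t + 1)(2t - 1)/(t - 1))` is a rational point on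
`E` of exact order `4`. -/
theorem R_has_order_four :
    ∃ h : Ecurve.Nonsingular ((tV + 1) * (2 * tV - 1) / (tV - 1))
      (2 * (tV + 1) * (2 * tV - 1) / (tV - 1)),
      4 • WeierstrassCurve.Affine.Point.some _ _ h = 0 ∧
        2 • WeierstrassCurve.Affine.Point.some _ _ h ≠ 0 := by
  set x : RatFunc ℚ := (tV + 1) * (2 * tV - 1) / (tV - 1) with hx
  set y : RatFunc ℚ := 2 * (tV + 1) * (2 * tV - 1) / (tV - 1) with hy
  have h1 := ht1
  have h2 := ht2
  have h3 := ht3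
  have hy0 : y ≠ 0 := by
    rw [hy]
    exact div_ne_zero (mul_ne_zero (mul_ne_zero htwoRF h2) h3) h1
  have hR : Ecurve.Nonsingular x y := by
    rw [WeierstrassCurve.Affine.nonsingular_iff]
    constructor
    · rw [WeierstrassCurve.Affine.equation_iff]
      simp only [Ecurve, hx, hy]
      field_simp
      ring
    · right
      simp only [Ecurve, mul_zero, zero_mul, sub_zero]
      intro h
      exact hy0 (half_of_double_eq_zero (by linear_combination h))
  have hyne : y ≠ Ecurve.negY x y := by
    simp only [WeierstrassCurve.Affine.negY, Ecurve, mul_zero, zero_mul, sub_zero]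
    intro h
    exact hy0 (half_of_double_eq_zero (by linear_combination h))
  refine ⟨hR, ?_, ?_⟩
  · rw [(by norm_num : (4 : ℕ) = 2 * 2), mul_smul, two_smul, two_smul,
      WeierstrassCurve.Affine.Point.add_self_of_Y_ne hyne]
    apply WeierstrassCurve.Affine.Point.add_self_of_Y_eq
    have hslope : Ecurve.slope x x y y = 2 := by
      rw [WeierstrassCurve.Affine.slope_of_Y_ne rfl hyne]
      simp only [Ecurve, WeierstrassCurve.Affine.negY, mul_zero, zero_mul, sub_zero]
      rw [div_eq_iff (by
        intro h
        exact hy0 (half_of_double_eq_zero (by linear_combination h)))]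
      rw [hx, hy]
      field_simp
      ring
    have haddX : Ecurve.addX x x (Ecurve.slope x x y y) = 0 := by
      rw [hslope]
      simp only [WeierstrassCurve.Affine.addX, Ecurve]
      rw [hx]
      field_simp
      ring
    have haddY : Ecurve.addY x x y (Ecurve.slope x x y y) = 0 := by
      simp only [WeierstrassCurve.Affine.addY, WeierstrassCurve.Affine.negAddY, haddX]
      rw [hslope]
      simp only [WeierstrassCurve.Affine.negY, Ecurve, mul_zero, zero_mul, sub_zero]
      rw [hx, hy]
      field_simp
      ring
    rw [haddY, WeierstrassCurve.Affine.negY]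
    simp [Ecurve]
  · rw [two_smul, WeierstrassCurve.Affine.Point.add_self_of_Y_ne hyne]
    exact WeierstrassCurve.Affine.Point.some_ne_zero _
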